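/- Up to isomorphism or anti-isomorphism, there are exactly 9 semirings with 2 elements. -/

import Mathlib

/-- The operation `·^σ`: `x ·^σ y = ((x σ⁻¹) · (y σ⁻¹)) σ`. -/
def opConj {S : Type*} (σ : Equiv.Perm S) (f : S → S → S) : S → S → S :=
  fun x y => σ (f (σ.symm x) (σ.symm y))

/-- `(S, add, mul)` is a semiring: `add` is an associative commutative
operation, `mul` is associative, and `mul` distributes over `add` on both
sides. No additive identity is required. -/
def IsSemiringOps {S : Type*} (add mul : S → S → S) : Prop :=
  (∀ x y z, add (add x y) z = add x (add y z)) ∧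
  (∀ x y, add x y = add y x) ∧
  (∀ x y z, mul (mul x y) z = mul x (mul y z)) ∧
  (∀ x y z, mul x (add y z) = add (mul x y) (mul x z)) ∧
  (∀ x y z, mul (add y z) x = add (mul y x) (mul z x))

/-- The semirings `(S, add₁, mul₁)` and `(S, add₂, mul₂)` are isomorphic via a
single bijection preserving both operations. -/
def SemiringIso {S : Type*} (add₁ mul₁ add₂ mul₂ : S → S → S) : Prop :=
  ∃ φ : Equiv.Perm S, (∀ x y, φ (add₁ x y) = add₂ (φ x) (φ y)) ∧
    (∀ x y, φ (mul₁ x y) = mul₂ (φ x) (φ y))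

/-- The semirings `(S, add₁, mul₁)` and `(S, add₂, mul₂)` are anti-isomorphic:
a bijection preserving addition and reversing multiplication. -/
def SemiringAntiIso {S : Type*} (add₁ mul₁ add₂ mul₂ : S → S → S) : Prop :=
  ∃ φ : Equiv.Perm S, (∀ x y, φ (add₁ x y) = add₂ (φ x) (φ y)) ∧
    (∀ x y, φ (mul₁ x y) = mul₂ (φ y) (φ x))

/-! On a two-element set the classification is a finite check: there are sixteen binary
operations and the swap is the only non-identity bijection. Up to relabelling the addition is
constant, the semilattice `min`, or the group `ℤ/2` (`+` on `Fin 2`); the nine representatives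
list, for each, the multiplications distributing over it, one per (anti-)isomorphism class. -/

instance instDecidableIsSemiringOps {S : Type*} [Fintype S] [DecidableEq S] (add mul : S → S → S) :
    Decidable (IsSemiringOps add mul) := by
  unfold IsSemiringOps; infer_instance

instance instDecidableSemiringIso {S : Type*} [Fintype S] [DecidableEq S]
    (add₁ mul₁ add₂ mul₂ : S → S → S) : Decidable (SemiringIso add₁ mul₁ add₂ mul₂) := by
  unfold SemiringIso; infer_instance

instance instDecidableSemiringAntiIso {S : Type*} [Fintype S] [DecidableEq S]
    (add₁ mul₁ add₂ mul₂ : S → S → S) : Decidable (SemiringAntiIso add₁ mul₁ add₂ mul₂) := by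
  unfold SemiringAntiIso; infer_instance

def twoElementSemirings : Finset ((Fin 2 → Fin 2 → Fin 2) × (Fin 2 → Fin 2 → Fin 2)) :=
  {(fun _ _ => 0, fun _ _ => 0), (fun _ _ => 0, min),
   (min, fun _ _ => 0), (min, min), (min, fun x _ => x), (min, max), (min, fun _ _ => 1),
   ((· + ·), fun _ _ => 0), ((· + ·), (· * ·))}

theorem card_twoElementSemirings : twoElementSemirings.card = 9 := by
  decide

set_option maxRecDepth 10000 in
theorem isSemiringOps_of_mem_twoElementSemirings :
    ∀ p ∈ twoElementSemirings, IsSemiringOps p.1 p.2 := by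
  decide

theorem not_iso_of_mem_twoElementSemirings :
    ∀ p ∈ twoElementSemirings, ∀ q ∈ twoElementSemirings, p ≠ q →
      ¬ (SemiringIso p.1 p.2 q.1 q.2 ∨ SemiringAntiIso p.1 p.2 q.1 q.2) := by
  decide

theorem exists_mem_twoElementSemirings_iso (add mul : Fin 2 → Fin 2 → Fin 2)
    (h : IsSemiringOps add mul) :
    ∃ p ∈ twoElementSemirings, SemiringIso add mul p.1 p.2 ∨ SemiringAntiIso add mul p.1 p.2 := by
  revert add mul
  decide

/-- There are exactly 9 semirings with 2 elements up to isomorphism or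
anti-isomorphism. -/
theorem card_semirings_two_up_to_anti : ∃ reps :
    Finset ((Fin 2 → Fin 2 → Fin 2) × (Fin 2 → Fin 2 → Fin 2)),
    reps.card = 9 ∧
    (∀ p ∈ reps, IsSemiringOps p.1 p.2) ∧
    (∀ p ∈ reps, ∀ q ∈ reps, p ≠ q →
      ¬ (SemiringIso p.1 p.2 q.1 q.2 ∨ SemiringAntiIso p.1 p.2 q.1 q.2)) ∧
    (∀ add mul : Fin 2 → Fin 2 → Fin 2, IsSemiringOps add mul →
      ∃ p ∈ reps, SemiringIso add mul p.1 p.2 ∨ SemiringAntiIso add mul p.1 p.2) :=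
  ⟨twoElementSemirings, card_twoElementSemirings, isSemiringOps_of_mem_twoElementSemirings,
    not_iso_of_mem_twoElementSemirings, exists_mem_twoElementSemirings_iso⟩
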